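/- arXiv:2604.18848 — 4 statements merged into one kernel-verified Lean document; each statement's English description precedes it below -/
import Mathlib

section
/- For every solution of the delayed Hegselmann–Krause system and all t ≥ τ, one has max_{i} |ẋ_i(t)| ≤ d_x(t−τ) + ∫_{t−τ}^{t−σ} max_{i} |ẋ_i(s)| ds. -/
/-!
On `[t - τ, t - σ]` each agent moves by at most `∫ max_i |ẋ_i|`, so every difference
`x_j(t - τ) - x_i(t - σ)` entering the right-hand side at time `t` is bounded by
`d_x(t - τ)` plus that integral. Since `ψ ≤ 1` and there are `N - 1` terms, the right-hand
side is a combination of these differences with nonnegative weights of total mass at most `1`.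
-/

open scoped BigOperators
open MeasureTheory

/-- Diameter of the agent configuration at time `t`. -/
noncomputable def hkDiam {N d : ℕ} (x : Fin N → ℝ → EuclideanSpace ℝ (Fin d)) (t : ℝ) : ℝ :=
  ⨆ i : Fin N, ⨆ j : Fin N, ‖x i t - x j t‖

/-- Maximum of the norms of the derivatives at time `t`. -/
noncomputable def hkMaxDer {N d : ℕ} (x' : Fin N → ℝ → EuclideanSpace ℝ (Fin d)) (t : ℝ) : ℝ :=
  ⨆ i : Fin N, ‖x' i t‖

open Set

noncomputable def hkField {N d : ℕ} (ψ : ℝ → ℝ) (σ τ : ℝ)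
    (x : Fin N → ℝ → EuclideanSpace ℝ (Fin d)) (i : Fin N) (t : ℝ) :
    EuclideanSpace ℝ (Fin d) :=
  ∑ j ∈ Finset.univ.erase i,
    (ψ ‖x i (t - σ) - x j (t - τ)‖ / (N - 1)) • (x j (t - τ) - x i (t - σ))

lemma norm_sum_smul_le_of_sum_le_one {ι E : Type*} [SeminormedAddCommGroup E]
    [NormedSpace ℝ E] {s : Finset ι} {c : ι → ℝ} {v : ι → E} {M : ℝ}
    (hc : ∀ j ∈ s, 0 ≤ c j) (hsum : ∑ j ∈ s, c j ≤ 1) (hv : ∀ j ∈ s, ‖v j‖ ≤ M)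
    (hM : 0 ≤ M) : ‖∑ j ∈ s, c j • v j‖ ≤ M :=
  calc ‖∑ j ∈ s, c j • v j‖ ≤ ∑ j ∈ s, c j * M := by
        refine (norm_sum_le _ _).trans (Finset.sum_le_sum fun j hj => ?_)
        rw [norm_smul, Real.norm_of_nonneg (hc j hj)]
        exact mul_le_mul_of_nonneg_left (hv j hj) (hc j hj)
    _ = (∑ j ∈ s, c j) * M := (Finset.sum_mul ..).symm
    _ ≤ M := mul_le_of_le_one_left hM hsum

section Configuration

variable {N d : ℕ}

lemma norm_sub_le_hkDiam (x : Fin N → ℝ → EuclideanSpace ℝ (Fin d)) (t : ℝ) (i j : Fin N) :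
    ‖x i t - x j t‖ ≤ hkDiam x t :=
  (le_ciSup (Finite.bddAbove_range _) j).trans
    (le_ciSup (f := fun i => ⨆ j, ‖x i t - x j t‖) (Finite.bddAbove_range _) i)

lemma hkDiam_nonneg (x : Fin N → ℝ → EuclideanSpace ℝ (Fin d)) (t : ℝ) : 0 ≤ hkDiam x t :=
  Real.iSup_nonneg fun _ => Real.iSup_nonneg fun _ => norm_nonneg _

lemma norm_le_hkMaxDer (x' : Fin N → ℝ → EuclideanSpace ℝ (Fin d)) (t : ℝ) (i : Fin N) :
    ‖x' i t‖ ≤ hkMaxDer x' t :=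
  le_ciSup (f := fun i => ‖x' i t‖) (Finite.bddAbove_range _) i

lemma hkMaxDer_nonneg (x' : Fin N → ℝ → EuclideanSpace ℝ (Fin d)) (t : ℝ) :
    0 ≤ hkMaxDer x' t :=
  Real.iSup_nonneg fun _ => norm_nonneg _

lemma ContinuousOn.hkMaxDer {F : Fin N → ℝ → EuclideanSpace ℝ (Fin d)} {s : Set ℝ}
    (hF : ∀ i, ContinuousOn (F i) s) : ContinuousOn (hkMaxDer F) s := by
  rcases isEmpty_or_nonempty (Fin N) with hN | hN
  · exact continuousOn_const.congr fun t _ => Real.iSup_of_isEmpty _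
  · refine (ContinuousOn.finset_sup'_apply Finset.univ_nonempty fun i _ => (hF i).norm).congr
      fun t _ => ?_
    exact (Finset.sup'_univ_eq_ciSup _).symm

lemma continuousOn_hkField {ψ : ℝ → ℝ} {σ τ : ℝ} {x : Fin N → ℝ → EuclideanSpace ℝ (Fin d)}
    (hψ : ContinuousOn ψ (Ici 0)) (hx : ∀ i, ContinuousOn (x i) (Ici (-τ))) (hστ : σ ≤ τ)
    (i : Fin N) : ContinuousOn (hkField ψ σ τ x i) (Ici 0) := by
  have delay : ∀ c ≤ τ, ∀ k, ContinuousOn (fun s => x k (s - c)) (Ici 0) := fun c hc k =>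
    (hx k).comp (continuous_sub_right c).continuousOn fun s (hs : 0 ≤ s) => by
      simp only [mem_Ici]; linarith
  refine continuousOn_finsetSum _ fun j _ => ContinuousOn.fun_smul ?_ ?_
  · exact (hψ.comp ((delay σ hστ i).sub (delay τ le_rfl j)).norm
      fun _ _ => norm_nonneg _).div_const _
  · exact (delay τ le_rfl j).sub (delay σ hστ i)

lemma norm_hkField_le {ψ : ℝ → ℝ} {σ τ M t : ℝ} {x : Fin N → ℝ → EuclideanSpace ℝ (Fin d)}
    (hψ0 : ∀ s, 0 ≤ s → 0 ≤ ψ s) (hψ1 : ∀ s, 0 ≤ s → ψ s ≤ 1) (hM : 0 ≤ M) (i : Fin N)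
    (h : ∀ j, ‖x j (t - τ) - x i (t - σ)‖ ≤ M) : ‖hkField ψ σ τ x i t‖ ≤ M := by
  have hN : (0 : ℝ) ≤ N - 1 := by
    have := i.pos
    rw [sub_nonneg, Nat.one_le_cast]
    omega
  refine norm_sum_smul_le_of_sum_le_one (fun j _ => div_nonneg (hψ0 _ (norm_nonneg _)) hN)
    ?_ (fun j _ => h j) hM
  calc ∑ j ∈ Finset.univ.erase i, ψ ‖x i (t - σ) - x j (t - τ)‖ / (N - 1)
      ≤ ∑ _j ∈ Finset.univ.erase i, 1 / ((N : ℝ) - 1) :=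
        Finset.sum_le_sum fun j _ => div_le_div_of_nonneg_right (hψ1 _ (norm_nonneg _)) hN
    _ = (N - 1) * (1 / ((N : ℝ) - 1)) := by
        rw [Finset.sum_const, Finset.card_erase_of_mem (Finset.mem_univ i), Finset.card_univ,
          Fintype.card_fin, nsmul_eq_mul, Nat.cast_pred i.pos]
    _ ≤ 1 := by
        rw [mul_one_div]
        exact div_self_le_one _

end Configuration

lemma ContinuousOn.intervalIntegrable_of_eqOn_Ioc {E : Type*} [NormedAddCommGroup E]
    {f g : ℝ → E} {a b : ℝ} (hab : a ≤ b) (hf : ContinuousOn f (Icc a b))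
    (hg : EqOn g f (Ioc a b)) : IntervalIntegrable g volume a b :=
  (hf.intervalIntegrable_of_Icc hab).congr (by rw [uIoc_of_le hab]; exact hg.symm)

section Trajectory

variable {N d : ℕ} {x x' F : Fin N → ℝ → EuclideanSpace ℝ (Fin d)} {a b : ℝ}

lemma norm_sub_le_integral_hkMaxDer (hab : a ≤ b) (hxc : ∀ i, ContinuousOn (x i) (Icc a b))
    (hder : ∀ i, ∀ s ∈ Ioo a b, HasDerivAt (x i) (x' i s) s)
    (hF : ∀ i, ContinuousOn (F i) (Icc a b)) (hx' : ∀ i, EqOn (x' i) (F i) (Ioc a b))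
    (i : Fin N) : ‖x i b - x i a‖ ≤ ∫ s in a..b, hkMaxDer x' s := by
  rw [← intervalIntegral.integral_eq_sub_of_hasDerivAt_of_le hab (hxc i) (hder i)
    ((hF i).intervalIntegrable_of_eqOn_Ioc hab (hx' i))]
  refine intervalIntegral.norm_integral_le_of_norm_le hab
    (ae_of_all _ fun s _ => norm_le_hkMaxDer x' s i) ?_
  exact (ContinuousOn.hkMaxDer hF).intervalIntegrable_of_eqOn_Ioc hab fun s hs =>
    congrArg iSup (funext fun i => congrArg norm (hx' i hs))

lemma norm_sub_le_hkDiam_add_integral (hab : a ≤ b) (hxc : ∀ i, ContinuousOn (x i) (Icc a b))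
    (hder : ∀ i, ∀ s ∈ Ioo a b, HasDerivAt (x i) (x' i s) s)
    (hF : ∀ i, ContinuousOn (F i) (Icc a b)) (hx' : ∀ i, EqOn (x' i) (F i) (Ioc a b))
    (i j : Fin N) : ‖x j a - x i b‖ ≤ hkDiam x a + ∫ s in a..b, hkMaxDer x' s :=
  calc ‖x j a - x i b‖ ≤ ‖x j a - x i a‖ + ‖x i a - x i b‖ := norm_sub_le_norm_sub_add_norm_sub ..
    _ ≤ hkDiam x a + ∫ s in a..b, hkMaxDer x' s := by
        rw [norm_sub_rev (x i a)]
        exact add_le_add (norm_sub_le_hkDiam x a j i)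
          (norm_sub_le_integral_hkMaxDer hab hxc hder hF hx' i)

end Trajectory

theorem stmt_2_general
    (N d : ℕ)
    (σ τ : ℝ) (hστ : σ ≤ τ) (hτ : 0 < τ)
    (ψ : ℝ → ℝ)
    (hψpos : ∀ s, 0 ≤ s → 0 < ψ s)
    (hψcont : ContinuousOn ψ (Set.Ici 0))
    (hψbdd : ∀ s, 0 ≤ s → ψ s ≤ 1)
    (x x' : Fin N → ℝ → EuclideanSpace ℝ (Fin d))
    (hxc : ∀ i, ContinuousOn (x i) (Set.Ici (-τ)))
    (hder : ∀ i, ∀ t > (0:ℝ), HasDerivAt (x i) (x' i t) t)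
    (hode : ∀ i, ∀ t > (0:ℝ),
      x' i t = ∑ j ∈ Finset.univ.erase i,
        (ψ ‖x i (t - σ) - x j (t - τ)‖ / (N - 1)) • (x j (t - τ) - x i (t - σ))) :
    ∀ t, τ ≤ t →
      hkMaxDer x' t ≤ hkDiam x (t - τ) + ∫ s in (t - τ)..(t - σ), hkMaxDer x' s := by
  intro t ht
  have hab : t - τ ≤ t - σ := by linarith
  have hIcc : Icc (t - τ) (t - σ) ⊆ Ici 0 := fun s hs => le_trans (by linarith) hs.1
  have hIoc : Ioc (t - τ) (t - σ) ⊆ Ioi 0 := fun s hs => lt_of_le_of_lt (by linarith) hs.1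
  have hM : 0 ≤ hkDiam x (t - τ) + ∫ s in (t - τ)..(t - σ), hkMaxDer x' s :=
    add_nonneg (hkDiam_nonneg x _)
      (intervalIntegral.integral_nonneg hab fun s _ => hkMaxDer_nonneg x' s)
  refine Real.iSup_le (fun i => ?_) hM
  rw [hode i t (by linarith)]
  refine norm_hkField_le (fun s hs => (hψpos s hs).le) hψbdd hM i fun j => ?_
  exact norm_sub_le_hkDiam_add_integral hab
    (fun k => (hxc k).mono fun s hs => by simp only [mem_Ici]; linarith [hs.1])
    (fun k s hs => hder k s (hIoc (Ioo_subset_Ioc_self hs)))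
    (fun k => (continuousOn_hkField hψcont hxc hστ k).mono hIcc)
    (fun k s hs => hode k s (hIoc hs)) i j

theorem stmt_2
    (N d : ℕ) (hN : 2 ≤ N) (hd : 1 ≤ d)
    (σ τ : ℝ) (hσ : 0 ≤ σ) (hστ : σ ≤ τ) (hτ : 0 < τ)
    (ψ : ℝ → ℝ)
    (hψpos : ∀ s, 0 ≤ s → 0 < ψ s)
    (hψcont : ContinuousOn ψ (Set.Ici 0))
    (hψmono : ∀ s t, 0 ≤ s → s ≤ t → ψ t ≤ ψ s)
    (hψbdd : ∀ s, 0 ≤ s → ψ s ≤ 1)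
    (x x' : Fin N → ℝ → EuclideanSpace ℝ (Fin d))
    (hxc : ∀ i, ContinuousOn (x i) (Set.Ici (-τ)))
    (hder : ∀ i, ∀ t > (0:ℝ), HasDerivAt (x i) (x' i t) t)
    (hode : ∀ i, ∀ t > (0:ℝ),
      x' i t = ∑ j ∈ Finset.univ.erase i,
        (ψ ‖x i (t - σ) - x j (t - τ)‖ / (N - 1)) • (x j (t - τ) - x i (t - σ))) :
    ∀ t, τ ≤ t →
      hkMaxDer x' t ≤ hkDiam x (t - τ) + ∫ s in (t - τ)..(t - σ), hkMaxDer x' s :=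
  stmt_2_general N d σ τ hστ hτ ψ hψpos hψcont hψbdd x x' hxc hder hode
end

section
/- Let 0 < σ ≤ τ. For every solution of the delayed Hegselmann–Krause system and every integer K ≥ 1, one has the recurrence Δ^K_x ≤ Δ^0_x + (1+σ)Δ^{K−1}_x + σ ∑_{k=0}^{K−1} Δ^k_x. -/
open scoped BigOperators
open MeasureTheory

/-- `Δ^K_x`: for `K = 0`, `max_{i,j} max_{s,t ∈ [-τ,0]} |x_i(s) - x_j(t)|`;
for `K ≥ 1`, `max_{i,j} max_{t ∈ [-τ,Kσ]} max_{s ∈ [(K-1)σ,Kσ]} |x_j(t) - x_i(s)|`. -/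
noncomputable def hkDelta {N d : ℕ} (σ τ : ℝ)
    (x : Fin N → ℝ → EuclideanSpace ℝ (Fin d)) : ℕ → ℝ
  | 0 => ⨆ i : Fin N, ⨆ j : Fin N, ⨆ s : Set.Icc (-τ) (0:ℝ), ⨆ t : Set.Icc (-τ) (0:ℝ),
      ‖x i s - x j t‖
  | (K + 1) => ⨆ i : Fin N, ⨆ j : Fin N, ⨆ t : Set.Icc (-τ) (((K:ℝ) + 1) * σ),
      ⨆ s : Set.Icc ((K:ℝ) * σ) (((K:ℝ) + 1) * σ), ‖x j t - x i s‖

/-- A quadruply nested conditional supremum is at least any of its terms,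
provided the function is uniformly bounded above. -/
lemma hk_le_iSup4 {ι β γ δ : Type*} [Nonempty ι] [Nonempty β] [Nonempty γ] [Nonempty δ]
    (f : ι → β → γ → δ → ℝ) (C : ℝ) (hf : ∀ i b c e, f i b c e ≤ C)
    (i : ι) (b : β) (c : γ) (e : δ) :
    f i b c e ≤ ⨆ i, ⨆ b, ⨆ c, ⨆ e, f i b c e := by
  have h1 : ∀ i b c, (⨆ e, f i b c e) ≤ C := fun i b c => ciSup_le (hf i b c)
  have h2 : ∀ i b, (⨆ c, ⨆ e, f i b c e) ≤ C := fun i b => ciSup_le (h1 i b)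
  have h3 : ∀ i, (⨆ b, ⨆ c, ⨆ e, f i b c e) ≤ C := fun i => ciSup_le (h2 i)
  calc f i b c e ≤ ⨆ e, f i b c e :=
        le_ciSup ⟨C, by rintro _ ⟨e, rfl⟩; exact hf i b c e⟩ e
    _ ≤ ⨆ c, ⨆ e, f i b c e :=
        le_ciSup ⟨C, by rintro _ ⟨c, rfl⟩; exact h1 i b c⟩ c
    _ ≤ ⨆ b, ⨆ c, ⨆ e, f i b c e :=
        le_ciSup ⟨C, by rintro _ ⟨b, rfl⟩; exact h2 i b⟩ b
    _ ≤ ⨆ i, ⨆ b, ⨆ c, ⨆ e, f i b c e :=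
        le_ciSup ⟨C, by rintro _ ⟨i, rfl⟩; exact h3 i⟩ i

lemma hk_iSup4_le {ι β γ δ : Type*} [Nonempty ι] [Nonempty β] [Nonempty γ] [Nonempty δ]
    {f : ι → β → γ → δ → ℝ} {C : ℝ} (hf : ∀ i b c e, f i b c e ≤ C) :
    (⨆ i, ⨆ b, ⨆ c, ⨆ e, f i b c e) ≤ C :=
  ciSup_le fun i => ciSup_le fun b => ciSup_le fun c => ciSup_le (hf i b c)

lemma hkDelta_nonneg {N d : ℕ} (σ τ : ℝ) (x : Fin N → ℝ → EuclideanSpace ℝ (Fin d)) :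
    ∀ k : ℕ, 0 ≤ hkDelta σ τ x k
  | 0 => Real.iSup_nonneg fun _ => Real.iSup_nonneg fun _ => Real.iSup_nonneg fun _ =>
      Real.iSup_nonneg fun _ => norm_nonneg _
  | (K + 1) => Real.iSup_nonneg fun _ => Real.iSup_nonneg fun _ => Real.iSup_nonneg fun _ =>
      Real.iSup_nonneg fun _ => norm_nonneg _

theorem stmt_7
    (N d : ℕ) (hN : 2 ≤ N) (hd : 1 ≤ d)
    (σ τ : ℝ) (hσ : 0 < σ) (hστ : σ ≤ τ)
    (ψ : ℝ → ℝ)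
    (hψpos : ∀ s, 0 ≤ s → 0 < ψ s)
    (hψcont : ContinuousOn ψ (Set.Ici 0))
    (hψmono : ∀ s t, 0 ≤ s → s ≤ t → ψ t ≤ ψ s)
    (hψbdd : ∀ s, 0 ≤ s → ψ s ≤ 1)
    (x x' : Fin N → ℝ → EuclideanSpace ℝ (Fin d))
    (hxc : ∀ i, ContinuousOn (x i) (Set.Ici (-τ)))
    (hder : ∀ i, ∀ t > (0:ℝ), HasDerivAt (x i) (x' i t) t)
    (hode : ∀ i, ∀ t > (0:ℝ),
      x' i t = ∑ j ∈ Finset.univ.erase i,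
        (ψ ‖x i (t - σ) - x j (t - τ)‖ / (N - 1)) • (x j (t - τ) - x i (t - σ))) :
    ∀ K : ℕ, 1 ≤ K →
      hkDelta σ τ x K ≤ hkDelta σ τ x 0 + (1 + σ) * hkDelta σ τ x (K - 1)
        + σ * ∑ k ∈ Finset.range K, hkDelta σ τ x k := by
  intro K hK
  obtain ⟨m, rfl⟩ : ∃ m, K = m + 1 := ⟨K - 1, (Nat.succ_pred_eq_of_pos hK).symm⟩
  haveI : Nonempty (Fin N) := ⟨⟨0, by omega⟩⟩
  have hτ0 : 0 < τ := lt_of_lt_of_le hσ hστ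
  have ha0 : (0:ℝ) ≤ (m:ℝ) * σ := mul_nonneg (Nat.cast_nonneg m) hσ.le
  have hab : (m:ℝ) * σ < ((m:ℝ) + 1) * σ := by nlinarith
  have hNR : (1:ℝ) ≤ (N:ℝ) - 1 := by
    have : (2:ℝ) ≤ (N:ℝ) := by exact_mod_cast hN
    linarith
  -- a uniform bound on the compact time interval
  obtain ⟨C, hC⟩ : ∃ C : ℝ, ∀ (i : Fin N) (y : ℝ),
      -τ ≤ y → y ≤ ((m:ℝ) + 1) * σ → ‖x i y‖ ≤ C := by
    have h := fun i : Fin N =>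
      (isCompact_Icc (a := -τ) (b := ((m:ℝ) + 1) * σ)).exists_bound_of_continuousOn
        ((hxc i).mono Set.Icc_subset_Ici_self)
    choose Cf hCf using h
    refine ⟨Finset.univ.sup' Finset.univ_nonempty Cf, fun i y hy1 hy2 => ?_⟩
    exact (hCf i y ⟨hy1, hy2⟩).trans (Finset.le_sup' Cf (Finset.mem_univ i))
  -- key lower bound on `hkDelta m`
  have claimLB : ∀ (i j : Fin N) (t s : ℝ), -τ ≤ t → t ≤ (m:ℝ) * σ →
      (m:ℝ) * σ - σ ≤ s → s ≤ (m:ℝ) * σ → ‖x j t - x i s‖ ≤ hkDelta σ τ x m := by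
    intro i j t s ht1 ht2 hs1 hs2
    cases m with
    | zero =>
      push_cast at ht2 hs1 hs2 hC
      have hts : -τ ≤ s := by linarith
      haveI : Nonempty (Set.Icc (-τ) (0:ℝ)) :=
        Set.Nonempty.to_subtype (Set.nonempty_Icc.mpr (by linarith))
      show ‖x j t - x i s‖ ≤ ⨆ i : Fin N, ⨆ j : Fin N, ⨆ s' : Set.Icc (-τ) (0:ℝ),
          ⨆ t' : Set.Icc (-τ) (0:ℝ), ‖x i s' - x j t'‖
      exact hk_le_iSup4 (fun p q (u : Set.Icc (-τ) (0:ℝ)) (v : Set.Icc (-τ) (0:ℝ)) =>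
        ‖x p u - x q v‖) (C + C)
        (fun p q u v => (norm_sub_le _ _).trans
          (add_le_add (hC p u u.2.1 (by nlinarith [u.2.2])) (hC q v v.2.1 (by nlinarith [v.2.2]))))
        j i ⟨t, ht1, by linarith⟩ ⟨s, hts, by linarith⟩
    | succ m' =>
      push_cast at ht2 hs1 hs2 hC
      have hupper : ((m':ℝ) + 1) * σ ≤ ((m':ℝ) + 1 + 1) * σ := by nlinarith
      have hlow : -τ ≤ (m':ℝ) * σ := by nlinarith [(Nat.cast_nonneg m' : (0:ℝ) ≤ _)]
      haveI : Nonempty (Set.Icc (-τ) (((m':ℝ) + 1) * σ)) :=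
        Set.Nonempty.to_subtype (Set.nonempty_Icc.mpr (by nlinarith [(Nat.cast_nonneg m' : (0:ℝ) ≤ _)]))
      haveI : Nonempty (Set.Icc ((m':ℝ) * σ) (((m':ℝ) + 1) * σ)) :=
        Set.Nonempty.to_subtype (Set.nonempty_Icc.mpr (by nlinarith [(Nat.cast_nonneg m' : (0:ℝ) ≤ _)]))
      show ‖x j t - x i s‖ ≤ ⨆ i : Fin N, ⨆ j : Fin N, ⨆ t' : Set.Icc (-τ) (((m':ℝ) + 1) * σ),
          ⨆ s' : Set.Icc ((m':ℝ) * σ) (((m':ℝ) + 1) * σ), ‖x j t' - x i s'‖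
      exact hk_le_iSup4 (fun p q (u : Set.Icc (-τ) (((m':ℝ) + 1) * σ))
          (v : Set.Icc ((m':ℝ) * σ) (((m':ℝ) + 1) * σ)) => ‖x q u - x p v‖) (C + C)
        (fun p q u v => (norm_sub_le _ _).trans
          (add_le_add (hC q u u.2.1 (le_trans u.2.2 hupper))
            (hC p v (le_trans hlow v.2.1) (le_trans v.2.2 hupper))))
        i j ⟨t, ht1, by linarith⟩ ⟨s, by linarith, by linarith⟩
  set D : ℝ := hkDelta σ τ x m with hD
  have hD0 : 0 ≤ D := hkDelta_nonneg σ τ x m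
  -- bound on the derivative
  have hderiv_bound : ∀ (i : Fin N) (u : ℝ), (m:ℝ) * σ < u → u ≤ ((m:ℝ) + 1) * σ →
      ‖x' i u‖ ≤ D := by
    intro i u hu1 hu2
    have hu0 : 0 < u := lt_of_le_of_lt ha0 hu1
    rw [hode i u hu0]
    have hcard : ((Finset.univ.erase i).card : ℝ) = (N:ℝ) - 1 := by
      rw [Finset.card_erase_of_mem (Finset.mem_univ i)]
      simp only [Finset.card_univ, Fintype.card_fin]
      rw [Nat.cast_sub (by omega)]
      simp
    calc ‖∑ j ∈ Finset.univ.erase i,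
          (ψ ‖x i (u - σ) - x j (u - τ)‖ / (N - 1)) • (x j (u - τ) - x i (u - σ))‖
        ≤ ∑ j ∈ Finset.univ.erase i,
          ‖(ψ ‖x i (u - σ) - x j (u - τ)‖ / (N - 1)) • (x j (u - τ) - x i (u - σ))‖ :=
          norm_sum_le _ _
      _ ≤ ∑ j ∈ Finset.univ.erase i, (1 / ((N:ℝ) - 1)) * D := by
          refine Finset.sum_le_sum fun j _ => ?_
          rw [norm_smul, Real.norm_eq_abs]
          have hψn : 0 ≤ ψ ‖x i (u - σ) - x j (u - τ)‖ :=
            (hψpos _ (norm_nonneg _)).le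
          have habs : |ψ ‖x i (u - σ) - x j (u - τ)‖ / ((N:ℝ) - 1)| ≤ 1 / ((N:ℝ) - 1) := by
            rw [abs_of_nonneg (div_nonneg hψn (by linarith))]
            exact (div_le_div_iff_of_pos_right (by linarith)).mpr (hψbdd _ (norm_nonneg _))
          have hv : ‖x j (u - τ) - x i (u - σ)‖ ≤ D := by
            refine claimLB i j (u - τ) (u - σ) (by linarith) (by linarith) (by linarith)
              (by linarith)
          exact mul_le_mul habs hv (norm_nonneg _) (by positivity)
      _ = D := by
          rw [Finset.sum_const, nsmul_eq_mul, hcard]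
          field_simp
  -- drift estimate on `[mσ, (m+1)σ]`
  have hdrift : ∀ (i : Fin N) (s : ℝ), (m:ℝ) * σ ≤ s → s ≤ ((m:ℝ) + 1) * σ →
      ‖x i s - x i ((m:ℝ) * σ)‖ ≤ σ * D := by
    intro i s hs1 hs2
    rcases eq_or_lt_of_le hs1 with heq | hlt
    · rw [← heq]
      simpa using mul_nonneg hσ.le hD0
    · have key : ∀ a' : ℝ, (m:ℝ) * σ < a' → a' ≤ s → ‖x i s - x i a'‖ ≤ D * (s - a') := by
        intro a' ha1 ha2
        have h1 : ∀ u ∈ Set.Icc a' s, HasDerivWithinAt (x i) (x' i u) (Set.Icc a' s) u :=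
          fun u hu => (hder i u (lt_of_le_of_lt ha0 (lt_of_lt_of_le ha1 hu.1))).hasDerivWithinAt
        have h2 : ∀ u ∈ Set.Ico a' s, ‖x' i u‖ ≤ D := fun u hu =>
          hderiv_bound i u (lt_of_lt_of_le ha1 hu.1) (le_trans hu.2.le hs2)
        exact norm_image_sub_le_of_norm_deriv_le_segment' h1 h2 s (Set.right_mem_Icc.mpr ha2)
      have hxa : Filter.Tendsto (x i) (nhdsWithin ((m:ℝ) * σ) (Set.Ioi ((m:ℝ) * σ)))
          (nhds (x i ((m:ℝ) * σ))) := by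
        have hmem : (m:ℝ) * σ ∈ Set.Ici (-τ) := by
          simp only [Set.mem_Ici]; linarith
        refine (hxc i ((m:ℝ) * σ) hmem).mono_left (nhdsWithin_mono _ fun y hy => ?_)
        simp only [Set.mem_Ioi] at hy
        simp only [Set.mem_Ici]
        linarith
      have t1 : Filter.Tendsto (fun a' => ‖x i s - x i a'‖)
          (nhdsWithin ((m:ℝ) * σ) (Set.Ioi ((m:ℝ) * σ))) (nhds ‖x i s - x i ((m:ℝ) * σ)‖) :=
        (Filter.Tendsto.sub tendsto_const_nhds hxa).norm
      have t2 : Filter.Tendsto (fun a' => D * (s - a'))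
          (nhdsWithin ((m:ℝ) * σ) (Set.Ioi ((m:ℝ) * σ))) (nhds (D * (s - (m:ℝ) * σ))) :=
        (Filter.Tendsto.sub tendsto_const_nhds
          (Filter.tendsto_id.mono_left nhdsWithin_le_nhds)).const_mul D
      have hev : ∀ᶠ a' in nhdsWithin ((m:ℝ) * σ) (Set.Ioi ((m:ℝ) * σ)),
          ‖x i s - x i a'‖ ≤ D * (s - a') := by
        filter_upwards [Ioc_mem_nhdsGT hlt] with a' ha'
        exact key a' ha'.1 ha'.2
      have hle : ‖x i s - x i ((m:ℝ) * σ)‖ ≤ D * (s - (m:ℝ) * σ) :=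
        le_of_tendsto_of_tendsto t1 t2 hev
      have : D * (s - (m:ℝ) * σ) ≤ D * σ := by
        apply mul_le_mul_of_nonneg_left _ hD0
        linarith
      linarith [mul_comm D σ]
  -- main pointwise bound
  have hmain : ∀ (i j : Fin N) (t s : ℝ), -τ ≤ t → t ≤ ((m:ℝ) + 1) * σ →
      (m:ℝ) * σ ≤ s → s ≤ ((m:ℝ) + 1) * σ → ‖x j t - x i s‖ ≤ (1 + 2 * σ) * D := by
    intro i j t s ht1 ht2 hs1 hs2
    have h2 : ‖x i ((m:ℝ) * σ) - x i s‖ ≤ σ * D := by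
      rw [norm_sub_rev]; exact hdrift i s hs1 hs2
    have h1 : ‖x j t - x i ((m:ℝ) * σ)‖ ≤ D + σ * D := by
      rcases le_or_gt t ((m:ℝ) * σ) with hta | hta
      · have := claimLB i j t ((m:ℝ) * σ) ht1 hta (by linarith) le_rfl
        nlinarith [mul_nonneg hσ.le hD0]
      · have htr : ‖x j t - x i ((m:ℝ) * σ)‖ ≤
            ‖x j t - x j ((m:ℝ) * σ)‖ + ‖x j ((m:ℝ) * σ) - x i ((m:ℝ) * σ)‖ := by
          have := dist_triangle (x j t) (x j ((m:ℝ) * σ)) (x i ((m:ℝ) * σ))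
          simpa [dist_eq_norm] using this
        have hb1 : ‖x j t - x j ((m:ℝ) * σ)‖ ≤ σ * D := hdrift j t hta.le ht2
        have hb2 : ‖x j ((m:ℝ) * σ) - x i ((m:ℝ) * σ)‖ ≤ D :=
          claimLB i j ((m:ℝ) * σ) ((m:ℝ) * σ) (by linarith) le_rfl (by linarith) le_rfl
        linarith
    have htr2 : ‖x j t - x i s‖ ≤ ‖x j t - x i ((m:ℝ) * σ)‖ + ‖x i ((m:ℝ) * σ) - x i s‖ := by
      have := dist_triangle (x j t) (x i ((m:ℝ) * σ)) (x i s)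
      simpa [dist_eq_norm] using this
    nlinarith
  -- conclude
  haveI : Nonempty (Set.Icc (-τ) (((m:ℝ) + 1) * σ)) :=
    Set.Nonempty.to_subtype (Set.nonempty_Icc.mpr (by linarith))
  haveI : Nonempty (Set.Icc ((m:ℝ) * σ) (((m:ℝ) + 1) * σ)) :=
    Set.Nonempty.to_subtype (Set.nonempty_Icc.mpr hab.le)
  have hfin : hkDelta σ τ x (m + 1) ≤ (1 + 2 * σ) * D := by
    show (⨆ i : Fin N, ⨆ j : Fin N, ⨆ t : Set.Icc (-τ) (((m:ℝ) + 1) * σ),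
        ⨆ s : Set.Icc ((m:ℝ) * σ) (((m:ℝ) + 1) * σ), ‖x j t - x i s‖) ≤ (1 + 2 * σ) * D
    exact hk_iSup4_le (f := fun (i : Fin N) (j : Fin N) (t : Set.Icc (-τ) (((m:ℝ) + 1) * σ))
        (s : Set.Icc ((m:ℝ) * σ) (((m:ℝ) + 1) * σ)) => ‖x j (t:ℝ) - x i (s:ℝ)‖)
      (fun i j t s => hmain i j t s t.2.1 t.2.2 s.2.1 s.2.2)
  have hsum : D ≤ ∑ k ∈ Finset.range (m + 1), hkDelta σ τ x k :=
    Finset.single_le_sum (fun k _ => hkDelta_nonneg σ τ x k) (Finset.self_mem_range_succ m)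
  have hsum' : σ * D ≤ σ * ∑ k ∈ Finset.range (m + 1), hkDelta σ τ x k :=
    mul_le_mul_of_nonneg_left hsum hσ.le
  have h00 : 0 ≤ hkDelta σ τ x 0 := hkDelta_nonneg σ τ x 0
  simp only [Nat.add_sub_cancel]
  rw [← hD]
  nlinarith
end

section
/- Let σ > 0 and let the sequence (Z^K)_{K≥0} be defined by Z^0 = 1 and, for K ≥ 1, Z^K = 1 + (1+σ)Z^{K−1} + σ ∑_{k=0}^{K−1} Z^k. Then for every K ≥ 0 one has the closed form Z^K = [((1+σ)+√(σ(1+σ)))^{K+1} − ((1+σ)−√(σ(1+σ)))^{K+1}]/(2√(σ(1+σ))). Equivalently, the sequence satisfies the second-order recurrence Z^K = (1+σ)(2Z^{K−1} − Z^{K−2}) for K ≥ 2 with Z^0 = 1 and Z^1 = 2(1+σ). -/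
open scoped BigOperators

theorem stmt_9
    (σ : ℝ) (hσ : 0 < σ)
    (Z : ℕ → ℝ)
    (hZ0 : Z 0 = 1)
    (hZrec : ∀ K : ℕ, 1 ≤ K →
      Z K = 1 + (1 + σ) * Z (K - 1) + σ * ∑ k ∈ Finset.range K, Z k) :
    (∀ K : ℕ,
      Z K = (((1 + σ) + Real.sqrt (σ * (1 + σ))) ^ (K + 1)
          - ((1 + σ) - Real.sqrt (σ * (1 + σ))) ^ (K + 1)) / (2 * Real.sqrt (σ * (1 + σ))))
    ∧ (∀ K : ℕ, 2 ≤ K → Z K = (1 + σ) * (2 * Z (K - 1) - Z (K - 2)))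
    ∧ Z 0 = 1 ∧ Z 1 = 2 * (1 + σ) := by
  set s := Real.sqrt (σ * (1 + σ)) with hs
  have hσ1 : (0:ℝ) < 1 + σ := by linarith
  have hspos : 0 < s := Real.sqrt_pos.mpr (by positivity)
  have hs2 : s ^ 2 = σ * (1 + σ) := Real.sq_sqrt (by positivity)
  have hZ1 : Z 1 = 2 * (1 + σ) := by
    have := hZrec 1 le_rfl
    simp [Finset.sum_range_one, hZ0] at this
    linarith
  -- second-order recurrence in +2 form
  have hrec2 : ∀ n : ℕ, Z (n + 2) = 2 * (1 + σ) * Z (n + 1) - (1 + σ) * Z n := by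
    intro n
    have h1 := hZrec (n + 2) (by omega)
    have h2 := hZrec (n + 1) (by omega)
    norm_num at h1 h2
    rw [Finset.sum_range_succ] at h1
    have h1' : Z (n + 2) = 1 + (1 + σ) * Z (n + 1) +
        σ * (∑ k ∈ Finset.range (n + 1), Z k) + σ * Z (n + 1) := by
      rw [h1]; ring
    have h2' : σ * ∑ k ∈ Finset.range (n + 1), Z k = Z (n + 1) - 1 - (1 + σ) * Z n := by
      linarith
    rw [h2'] at h1'
    linarith
  have key : ∀ K : ℕ,
      Z K = (((1 + σ) + s) ^ (K + 1) - ((1 + σ) - s) ^ (K + 1)) / (2 * s) := by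
    have base : ∀ K : ℕ,
        Z K = (((1 + σ) + s) ^ (K + 1) - ((1 + σ) - s) ^ (K + 1)) / (2 * s) ∧
        Z (K + 1) = (((1 + σ) + s) ^ (K + 2) - ((1 + σ) - s) ^ (K + 2)) / (2 * s) := by
      intro K
      induction K with
      | zero =>
        constructor
        · rw [hZ0]
          field_simp
          ring
        · rw [hZ1]
          field_simp
          ring
      | succ n ih =>
        obtain ⟨ih0, ih1⟩ := ih
        refine ⟨ih1, ?_⟩
        have ha : (1 + σ + s) ^ 2 = 2 * (1 + σ) * (1 + σ + s) - (1 + σ) := by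
          linear_combination hs2
        have hb : (1 + σ - s) ^ 2 = 2 * (1 + σ) * (1 + σ - s) - (1 + σ) := by
          linear_combination hs2
        have expand : (1 + σ + s) ^ (n + 3) - (1 + σ - s) ^ (n + 3)
            = 2 * (1 + σ) * ((1 + σ + s) ^ (n + 2) - (1 + σ - s) ^ (n + 2))
              - (1 + σ) * ((1 + σ + s) ^ (n + 1) - (1 + σ - s) ^ (n + 1)) := by
          linear_combination ((1 + σ + s) ^ (n + 1)) * ha - ((1 + σ - s) ^ (n + 1)) * hb
        rw [hrec2 n, ih0, ih1]
        rw [show n + 1 + 1 + 1 = n + 3 from rfl, expand]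
        have hsne : (2 * s) ≠ 0 := by positivity
        field_simp

    exact fun K => (base K).1
  refine ⟨key, ?_, hZ0, hZ1⟩
  intro K hK
  obtain ⟨n, rfl⟩ : ∃ n, K = n + 2 := ⟨K - 2, by omega⟩
  have := hrec2 n
  simp only [Nat.add_sub_cancel]
  have h1 : n + 2 - 1 = n + 1 := by omega
  rw [h1]
  linarith
end

section
/- Let 0 < σ ≤ τ. For every solution of the delayed Hegselmann–Krause system and every integer K ≥ 0, one has Δ^K_x ≤ Z^K_σ · Δ^0_x. -/
open scoped BigOperators
open MeasureTheory

/-- Closed-form sequence `Z^k_σ`. -/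
noncomputable def hkZ (σ : ℝ) (k : ℕ) : ℝ :=
  (((1 + σ) + Real.sqrt (σ * (1 + σ))) ^ (k + 1)
    - ((1 + σ) - Real.sqrt (σ * (1 + σ))) ^ (k + 1)) / (2 * Real.sqrt (σ * (1 + σ)))

section Aux

open Filter Set Topology

lemma hk_hkZ_zero {σ : ℝ} (hσ : 0 < σ) : hkZ σ 0 = 1 := by
  have h : (0:ℝ) < σ * (1 + σ) := by positivity
  have hr : 0 < Real.sqrt (σ * (1 + σ)) := Real.sqrt_pos.mpr h
  unfold hkZ
  rw [pow_one, pow_one]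
  field_simp
  ring

lemma hk_hkZ_one {σ : ℝ} (hσ : 0 < σ) : hkZ σ 1 = 2 * (1 + σ) := by
  have h : (0:ℝ) < σ * (1 + σ) := by positivity
  have hr : 0 < Real.sqrt (σ * (1 + σ)) := Real.sqrt_pos.mpr h
  unfold hkZ
  field_simp
  ring

lemma hk_hkZ_rec {σ : ℝ} (hσ : 0 < σ) (k : ℕ) :
    hkZ σ (k + 2) = 2 * (1 + σ) * hkZ σ (k + 1) - (1 + σ) * hkZ σ k := by
  have h : (0:ℝ) < σ * (1 + σ) := by positivity
  set r := Real.sqrt (σ * (1 + σ)) with hrdef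
  have hr : 0 < r := Real.sqrt_pos.mpr h
  have hr2 : r ^ 2 = σ * (1 + σ) := Real.sq_sqrt h.le
  unfold hkZ
  rw [← hrdef]
  have hA : (1+σ+r)*(1+σ+r) = 2*(1+σ)*(1+σ+r) - (1+σ) := by linear_combination hr2
  have hB : (1+σ-r)*(1+σ-r) = 2*(1+σ)*(1+σ-r) - (1+σ) := by linear_combination hr2
  set a := (1+σ+r)^(k+1) with ha
  set b := (1+σ-r)^(k+1) with hb
  have e1 : ((1+σ)+r) ^ (k+2+1) = ((1+σ+r)*(1+σ+r))*a := by rw [ha]; ring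
  have e2 : ((1+σ)-r) ^ (k+2+1) = ((1+σ-r)*(1+σ-r))*b := by rw [hb]; ring
  have e3 : ((1+σ)+r) ^ (k+1+1) = (1+σ+r)*a := by rw [ha]; ring
  have e4 : ((1+σ)-r) ^ (k+1+1) = (1+σ-r)*b := by rw [hb]; ring
  rw [e1, e2, e3, e4, hA, hB]
  have h2r : (2*r) ≠ 0 := by positivity
  field_simp
  ring

lemma hk_ftc_bound {E : Type*} [NormedAddCommGroup E] [NormedSpace ℝ E] {f f' : ℝ → E} {a s C : ℝ}
    (has : a ≤ s) (hC : 0 ≤ C)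
    (hf : ContinuousOn f (Set.Icc a s))
    (hder : ∀ t ∈ Set.Ioc a s, HasDerivAt f (f' t) t)
    (hbd : ∀ t ∈ Set.Ioc a s, ‖f' t‖ ≤ C) :
    ‖f s - f a‖ ≤ C * (s - a) := by
  rcases eq_or_lt_of_le has with rfl | hlt
  · simp
  have key : ∀ ε ∈ Set.Ioc (0:ℝ) (s - a), ‖f s - f (a + ε)‖ ≤ C * (s - a) := by
    rintro ε ⟨hε0, hεle⟩
    have hsub : Set.Icc (a + ε) s ⊆ Set.Ioc a s := fun t ht =>
      ⟨lt_of_lt_of_le (by linarith) ht.1, ht.2⟩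
    have hb := (convex_Icc (a + ε) s).norm_image_sub_le_of_norm_hasDerivWithin_le
      (fun t ht => (hder t (hsub ht)).hasDerivWithinAt)
      (fun t ht => hbd t (hsub ht))
      (Set.left_mem_Icc.mpr (by linarith)) (Set.right_mem_Icc.mpr (by linarith))
    calc ‖f s - f (a + ε)‖ ≤ C * ‖s - (a + ε)‖ := hb
      _ ≤ C * (s - a) := by
          rw [Real.norm_eq_abs, abs_of_nonneg (by linarith)]
          exact mul_le_mul_of_nonneg_left (by linarith) hC
  have hIoc : Set.Ioc (0:ℝ) (s - a) ∈ 𝓝[>] (0:ℝ) := Ioc_mem_nhdsGT_of_mem ⟨le_refl _, by linarith⟩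
  have htend : Tendsto (fun ε : ℝ => f (a + ε)) (𝓝[>] (0:ℝ)) (𝓝 (f a)) := by
    have h1 : Tendsto (fun ε : ℝ => a + ε) (𝓝[>] (0:ℝ)) (𝓝[Set.Icc a s] a) := by
      apply tendsto_nhdsWithin_of_tendsto_nhds_of_eventually_within
      · have h0 : Tendsto (fun ε : ℝ => a + ε) (𝓝 (0:ℝ)) (𝓝 a) := by
          have : Tendsto (fun ε : ℝ => ε) (𝓝 (0:ℝ)) (𝓝 (0:ℝ)) := tendsto_id
          simpa using this.const_add a
        exact h0.mono_left nhdsWithin_le_nhds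
      · filter_upwards [hIoc] with ε hε
        exact ⟨by linarith [hε.1], by linarith [hε.2]⟩
    exact (hf.continuousWithinAt (Set.left_mem_Icc.mpr has)).tendsto.comp h1
  have htend2 : Tendsto (fun ε : ℝ => ‖f s - f (a + ε)‖) (𝓝[>] (0:ℝ)) (𝓝 ‖f s - f a‖) :=
    (tendsto_const_nhds.sub htend).norm
  exact le_of_tendsto htend2 (by filter_upwards [hIoc] with ε hε using key ε hε)

lemma hk_quadSup_le {ι₁ ι₂ ι₃ ι₄ : Type*} [Nonempty ι₁] [Nonempty ι₂] [Nonempty ι₃] [Nonempty ι₄]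
    {F : ι₁ → ι₂ → ι₃ → ι₄ → ℝ} {c : ℝ} (h : ∀ a b u v, F a b u v ≤ c) :
    (⨆ a, ⨆ b, ⨆ u, ⨆ v, F a b u v) ≤ c :=
  ciSup_le fun a => ciSup_le fun b => ciSup_le fun u => ciSup_le fun v => h a b u v

lemma hk_le_quadSup {ι₁ ι₂ ι₃ ι₄ : Type*} [Nonempty ι₁] [Nonempty ι₂] [Nonempty ι₃] [Nonempty ι₄]
    {F : ι₁ → ι₂ → ι₃ → ι₄ → ℝ} {M : ℝ} (hM : ∀ a b u v, F a b u v ≤ M)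
    (a : ι₁) (b : ι₂) (u : ι₃) (v : ι₄) :
    F a b u v ≤ ⨆ a, ⨆ b, ⨆ u, ⨆ v, F a b u v := by
  have b4 : BddAbove (Set.range (fun v => F a b u v)) := by
    refine ⟨M, ?_⟩
    rintro _ ⟨v, rfl⟩
    exact hM a b u v
  have b3 : BddAbove (Set.range (fun u => ⨆ v, F a b u v)) := by
    refine ⟨M, ?_⟩
    rintro _ ⟨u, rfl⟩
    exact ciSup_le (hM a b u)
  have b2 : BddAbove (Set.range (fun b => ⨆ u, ⨆ v, F a b u v)) := by
    refine ⟨M, ?_⟩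
    rintro _ ⟨b, rfl⟩
    exact ciSup_le fun u => ciSup_le (hM a b u)
  have b1 : BddAbove (Set.range (fun a => ⨆ b, ⨆ u, ⨆ v, F a b u v)) := by
    refine ⟨M, ?_⟩
    rintro _ ⟨a, rfl⟩
    exact ciSup_le fun b => ciSup_le fun u => ciSup_le (hM a b u)
  have l4 : F a b u v ≤ ⨆ v, F a b u v := le_ciSup b4 v
  have l3 : (⨆ v, F a b u v) ≤ ⨆ u, ⨆ v, F a b u v := le_ciSup b3 u
  have l2 : (⨆ u, ⨆ v, F a b u v) ≤ ⨆ b, ⨆ u, ⨆ v, F a b u v := le_ciSup b2 b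
  have l1 : (⨆ b, ⨆ u, ⨆ v, F a b u v) ≤ ⨆ a, ⨆ b, ⨆ u, ⨆ v, F a b u v := le_ciSup b1 a
  exact l4.trans (l3.trans (l2.trans l1))

end Aux

theorem stmt_10
    (N d : ℕ) (hN : 2 ≤ N) (hd : 1 ≤ d)
    (σ τ : ℝ) (hσ : 0 < σ) (hστ : σ ≤ τ)
    (ψ : ℝ → ℝ)
    (hψpos : ∀ s, 0 ≤ s → 0 < ψ s)
    (hψcont : ContinuousOn ψ (Set.Ici 0))
    (hψmono : ∀ s t, 0 ≤ s → s ≤ t → ψ t ≤ ψ s)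
    (hψbdd : ∀ s, 0 ≤ s → ψ s ≤ 1)
    (x x' : Fin N → ℝ → EuclideanSpace ℝ (Fin d))
    (hxc : ∀ i, ContinuousOn (x i) (Set.Ici (-τ)))
    (hder : ∀ i, ∀ t > (0:ℝ), HasDerivAt (x i) (x' i t) t)
    (hode : ∀ i, ∀ t > (0:ℝ),
      x' i t = ∑ j ∈ Finset.univ.erase i,
        (ψ ‖x i (t - σ) - x j (t - τ)‖ / (N - 1)) • (x j (t - τ) - x i (t - σ))) :
    ∀ K : ℕ, hkDelta σ τ x K ≤ hkZ σ K * hkDelta σ τ x 0 := by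
  haveI : Nonempty (Fin N) := ⟨⟨0, by omega⟩⟩
  have hτ0 : (0:ℝ) < τ := lt_of_lt_of_le hσ hστ
  set D := hkDelta σ τ x with hD
  -- global bound on each window
  have hbnd : ∀ T : ℝ, ∃ M : ℝ, ∀ (i : Fin N) (t : ℝ), t ∈ Set.Icc (-τ) T → ‖x i t‖ ≤ M := by
    intro T
    have hc : ∀ i, ∃ Ci : ℝ, ∀ t ∈ Set.Icc (-τ) T, ‖x i t‖ ≤ Ci := fun i =>
      isCompact_Icc.exists_bound_of_continuousOn ((hxc i).mono Set.Icc_subset_Ici_self)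
    choose C hC using hc
    obtain ⟨M, hM⟩ := Finite.exists_le C
    exact ⟨M, fun i t ht => (hC i t ht).trans (hM i)⟩
  -- unified membership bound
  have hmemW : ∀ (K : ℕ) (i j : Fin N) (t s : ℝ),
      -τ ≤ t → t ≤ (K:ℝ)*σ → (K:ℝ)*σ - σ ≤ s → s ≤ (K:ℝ)*σ →
      ‖x j t - x i s‖ ≤ D K := by
    intro K i j t s ht1 ht2 hs1 hs2
    cases K with
    | zero =>
        simp only [Nat.cast_zero, zero_mul] at ht2 hs1 hs2
        obtain ⟨M, hM⟩ := hbnd 0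
        haveI : Nonempty (Set.Icc (-τ) (0:ℝ)) :=
          (Set.nonempty_Icc.mpr (by linarith)).to_subtype
        have hts : t ∈ Set.Icc (-τ) (0:ℝ) := ⟨ht1, ht2⟩
        have hss : s ∈ Set.Icc (-τ) (0:ℝ) := ⟨by linarith, hs2⟩
        have hMb : ∀ (i' j' : Fin N) (s' t' : Set.Icc (-τ) (0:ℝ)),
            ‖x i' s'.1 - x j' t'.1‖ ≤ M + M := by
          intro i' j' s' t'
          calc ‖x i' s'.1 - x j' t'.1‖ ≤ ‖x i' s'.1‖ + ‖x j' t'.1‖ := norm_sub_le _ _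
            _ ≤ M + M := add_le_add (hM i' s'.1 s'.2) (hM j' t'.1 t'.2)
        have := hk_le_quadSup
          (F := fun (i' j' : Fin N) (s' t' : Set.Icc (-τ) (0:ℝ)) => ‖x i' s'.1 - x j' t'.1‖)
          hMb j i ⟨t, hts⟩ ⟨s, hss⟩
        simpa [hD, hkDelta] using this
    | succ K =>
        have hKσ : (0:ℝ) ≤ (K:ℝ)*σ := by positivity
        push_cast at ht2 hs1 hs2
        obtain ⟨M, hM⟩ := hbnd (((K:ℝ)+1)*σ)
        haveI : Nonempty (Set.Icc (-τ) (((K:ℝ)+1)*σ)) :=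
          (Set.nonempty_Icc.mpr (by nlinarith)).to_subtype
        haveI : Nonempty (Set.Icc ((K:ℝ)*σ) (((K:ℝ)+1)*σ)) :=
          (Set.nonempty_Icc.mpr (by nlinarith)).to_subtype
        have hts : t ∈ Set.Icc (-τ) (((K:ℝ)+1)*σ) := ⟨ht1, by linarith⟩
        have hss : s ∈ Set.Icc ((K:ℝ)*σ) (((K:ℝ)+1)*σ) := ⟨by linarith, by linarith⟩
        have hsub : Set.Icc ((K:ℝ)*σ) (((K:ℝ)+1)*σ) ⊆ Set.Icc (-τ) (((K:ℝ)+1)*σ) :=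
          fun u hu => ⟨by linarith [hu.1], hu.2⟩
        have hMb : ∀ (i' j' : Fin N) (t' : Set.Icc (-τ) (((K:ℝ)+1)*σ))
            (s' : Set.Icc ((K:ℝ)*σ) (((K:ℝ)+1)*σ)), ‖x j' t'.1 - x i' s'.1‖ ≤ M + M := by
          intro i' j' t' s'
          calc ‖x j' t'.1 - x i' s'.1‖ ≤ ‖x j' t'.1‖ + ‖x i' s'.1‖ := norm_sub_le _ _
            _ ≤ M + M := add_le_add (hM j' t'.1 t'.2) (hM i' s'.1 (hsub s'.2))
        have := hk_le_quadSup
          (F := fun (i' j' : Fin N) (t' : Set.Icc (-τ) (((K:ℝ)+1)*σ))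
              (s' : Set.Icc ((K:ℝ)*σ) (((K:ℝ)+1)*σ)) => ‖x j' t'.1 - x i' s'.1‖)
          hMb i j ⟨t, hts⟩ ⟨s, hss⟩
        simpa [hD, hkDelta] using this
  -- nonnegativity
  have hD0 : ∀ K : ℕ, 0 ≤ D K := by
    intro K
    obtain ⟨i0⟩ := (inferInstance : Nonempty (Fin N))
    have hKσ : (0:ℝ) ≤ (K:ℝ)*σ := by positivity
    have h := hmemW K i0 i0 ((K:ℝ)*σ) ((K:ℝ)*σ) (by linarith) le_rfl (by linarith) le_rfl
    simpa using h
  -- derivative bound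
  have hdb : ∀ (K : ℕ) (i : Fin N) (u : ℝ), (K:ℝ)*σ < u → u ≤ (K:ℝ)*σ + σ →
      ‖x' i u‖ ≤ D K := by
    intro K i u hu1 hu2
    have hKσ : (0:ℝ) ≤ (K:ℝ)*σ := by positivity
    have hu0 : 0 < u := lt_of_le_of_lt hKσ hu1
    have hN1 : (1:ℝ) ≤ (N:ℝ) - 1 := by
      have : (2:ℝ) ≤ (N:ℝ) := by exact_mod_cast hN
      linarith
    rw [hode i u hu0]
    have step : ∀ j ∈ Finset.univ.erase i,
        ‖(ψ ‖x i (u - σ) - x j (u - τ)‖ / ((N:ℝ) - 1)) • (x j (u - τ) - x i (u - σ))‖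
          ≤ (1/((N:ℝ)-1)) * D K := by
      intro j _
      have harg : (0:ℝ) ≤ ‖x i (u - σ) - x j (u - τ)‖ := norm_nonneg _
      have hψ1 : ψ ‖x i (u - σ) - x j (u - τ)‖ ≤ 1 := hψbdd _ harg
      have hψ0 : 0 ≤ ψ ‖x i (u - σ) - x j (u - τ)‖ := (hψpos _ harg).le
      have hv : ‖x j (u - τ) - x i (u - σ)‖ ≤ D K :=
        hmemW K i j (u - τ) (u - σ) (by linarith) (by linarith) (by linarith) (by linarith)
      rw [norm_smul, Real.norm_eq_abs, abs_of_nonneg (by positivity)]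
      have hdivle : ψ ‖x i (u - σ) - x j (u - τ)‖ / ((N:ℝ) - 1) ≤ 1/((N:ℝ)-1) := by
        gcongr
      exact mul_le_mul hdivle hv (norm_nonneg _) (by positivity)
    calc ‖∑ j ∈ Finset.univ.erase i,
          (ψ ‖x i (u - σ) - x j (u - τ)‖ / ((N:ℝ) - 1)) • (x j (u - τ) - x i (u - σ))‖
        ≤ ∑ j ∈ Finset.univ.erase i,
          ‖(ψ ‖x i (u - σ) - x j (u - τ)‖ / ((N:ℝ) - 1)) • (x j (u - τ) - x i (u - σ))‖ :=
          norm_sum_le _ _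
      _ ≤ ∑ _j ∈ Finset.univ.erase i, (1/((N:ℝ)-1)) * D K := Finset.sum_le_sum step
      _ = ((Finset.univ.erase i).card : ℝ) * ((1/((N:ℝ)-1)) * D K) := by
          rw [Finset.sum_const, nsmul_eq_mul]
      _ = D K := by
          rw [Finset.card_erase_of_mem (Finset.mem_univ i), Finset.card_univ, Fintype.card_fin]
          have : ((N - 1 : ℕ) : ℝ) = (N:ℝ) - 1 := by
            push_cast [Nat.cast_sub (by omega : 1 ≤ N)]; ring
          rw [this]
          field_simp
  -- Lipschitz-type bound on a sigma-window
  have hlip : ∀ (K : ℕ) (i : Fin N) (s : ℝ), (K:ℝ)*σ ≤ s → s ≤ (K:ℝ)*σ + σ →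
      ‖x i s - x i ((K:ℝ)*σ)‖ ≤ σ * D K := by
    intro K i s hs1 hs2
    have hKσ : (0:ℝ) ≤ (K:ℝ)*σ := by positivity
    have h := hk_ftc_bound (f := x i) (f' := x' i) (a := (K:ℝ)*σ) (s := s) (C := D K)
      hs1 (hD0 K)
      ((hxc i).mono (fun u hu => by simp only [Set.mem_Ici]; linarith [hu.1]))
      (fun t ht => hder i t (lt_of_le_of_lt hKσ ht.1))
      (fun t ht => hdb K i t ht.1 (le_trans ht.2 hs2))
    calc ‖x i s - x i ((K:ℝ)*σ)‖ ≤ D K * (s - (K:ℝ)*σ) := h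
      _ ≤ σ * D K := by
          rw [mul_comm]
          exact mul_le_mul_of_nonneg_right (by linarith) (hD0 K)
  -- the step inequality
  have hstep : ∀ K : ℕ, D (K+1) ≤ (1 + 2*σ) * D K := by
    intro K
    have hKσ : (0:ℝ) ≤ (K:ℝ)*σ := by positivity
    haveI : Nonempty (Set.Icc (-τ) (((K:ℝ)+1)*σ)) :=
      (Set.nonempty_Icc.mpr (by nlinarith)).to_subtype
    haveI : Nonempty (Set.Icc ((K:ℝ)*σ) (((K:ℝ)+1)*σ)) :=
      (Set.nonempty_Icc.mpr (by nlinarith)).to_subtype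
    have hpt : ∀ (i j : Fin N) (t : Set.Icc (-τ) (((K:ℝ)+1)*σ))
        (s : Set.Icc ((K:ℝ)*σ) (((K:ℝ)+1)*σ)),
        ‖x j t.1 - x i s.1‖ ≤ (1 + 2*σ) * D K := by
      intro i j t s
      have ht1 := t.2.1; have ht2 := t.2.2
      have hs1 := s.2.1; have hs2 := s.2.2
      have h2 : ‖x i s.1 - x i ((K:ℝ)*σ)‖ ≤ σ * D K :=
        hlip K i s.1 hs1 (by linarith)
      have h1 : ‖x j t.1 - x i ((K:ℝ)*σ)‖ ≤ (1 + σ) * D K := by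
        rcases le_or_gt t.1 ((K:ℝ)*σ) with hc | hc
        · have := hmemW K i j t.1 ((K:ℝ)*σ) ht1 hc (by linarith) (le_refl _)
          nlinarith [hD0 K]
        · have ha : ‖x j t.1 - x j ((K:ℝ)*σ)‖ ≤ σ * D K :=
            hlip K j t.1 hc.le (by linarith)
          have hb : ‖x j ((K:ℝ)*σ) - x i ((K:ℝ)*σ)‖ ≤ D K :=
            hmemW K i j ((K:ℝ)*σ) ((K:ℝ)*σ) (by linarith) (le_refl _) (by linarith) (le_refl _)
          calc ‖x j t.1 - x i ((K:ℝ)*σ)‖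
              ≤ ‖x j t.1 - x j ((K:ℝ)*σ)‖ + ‖x j ((K:ℝ)*σ) - x i ((K:ℝ)*σ)‖ :=
                norm_sub_le_norm_sub_add_norm_sub _ _ _
            _ ≤ (1 + σ) * D K := by nlinarith
      calc ‖x j t.1 - x i s.1‖
          ≤ ‖x j t.1 - x i ((K:ℝ)*σ)‖ + ‖x i ((K:ℝ)*σ) - x i s.1‖ :=
            norm_sub_le_norm_sub_add_norm_sub _ _ _
        _ ≤ (1 + σ) * D K + σ * D K := by
            rw [norm_sub_rev (x i ((K:ℝ)*σ))]
            exact add_le_add h1 h2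
        _ = (1 + 2*σ) * D K := by ring
    have : hkDelta σ τ x (K+1) ≤ (1 + 2*σ) * D K := by
      simp only [hkDelta]
      exact hk_quadSup_le hpt
    simpa [hD] using this
  -- Z sequence facts
  have hZge : ∀ k : ℕ, 1 ≤ hkZ σ k ∧ (1+σ) * hkZ σ k ≤ hkZ σ (k+1) := by
    intro k
    induction k with
    | zero =>
        rw [hk_hkZ_zero hσ, hk_hkZ_one hσ]
        constructor <;> nlinarith
    | succ n ih =>
        obtain ⟨h1, h2⟩ := ih
        have hrec := hk_hkZ_rec hσ n
        have h3 : 1 ≤ hkZ σ (n+1) := by nlinarith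
        constructor
        · exact h3
        · have h4 : hkZ σ n ≤ hkZ σ (n+1) := by nlinarith
          have h5 : (1+σ) * hkZ σ n ≤ (1+σ) * hkZ σ (n+1) :=
            mul_le_mul_of_nonneg_left h4 (by linarith)
          have e : n+1+1 = n+2 := rfl
          rw [e, hrec]
          linarith
  have hZstep : ∀ k : ℕ, (1 + 2*σ) * hkZ σ k ≤ hkZ σ (k+1) := by
    intro k
    cases k with
    | zero => rw [hk_hkZ_zero hσ, hk_hkZ_one hσ]; nlinarith
    | succ n =>
        have hrec := hk_hkZ_rec hσ n
        obtain ⟨h1, h2⟩ := hZge n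
        have e : n+1+1 = n+2 := rfl
        rw [e, hrec]
        linarith
  -- final induction
  intro K
  induction K with
  | zero => rw [hk_hkZ_zero hσ, one_mul]
  | succ n ih =>
      calc D (n+1) ≤ (1 + 2*σ) * D n := hstep n
        _ ≤ (1 + 2*σ) * (hkZ σ n * D 0) :=
            mul_le_mul_of_nonneg_left ih (by positivity)
        _ = ((1 + 2*σ) * hkZ σ n) * D 0 := by ring
        _ ≤ hkZ σ (n+1) * D 0 := mul_le_mul_of_nonneg_right (hZstep n) (hD0 0)
end
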